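/- Let 0 ≤ i ≤ n and let U be an i × n matrix over ℤ whose rows form a ℤ-basis of a direct summand of ℤ^n of rank i. Let U' be the n × n matrix over ℤ[s₁,…,s_n] obtained by appending to U the rows (s₁^j,…,s_n^j) for j = 1,…,n−i. Then det U' is a homogeneous polynomial of degree 1 + 2 + ⋯ + (n−i) that is not divisible by any integer greater than 1; in particular det U' ≠ 0. -/

import Mathlib

/-!
Extend the rows of `U` to a unimodular matrix `A`. Expanding `det U'` multilinearly in its last
`n - i` rows gives `det U' = ∑_r (∏_a s_{r a}^{a-i+1}) · det E_r`, where `E_r` has the rows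
of `U` on top and the unit vectors `e_{r a}` below. Since the exponents are distinct, distinct
injective `r` give distinct monomials, so every `det E_r` is a coefficient of `det U'`. The
same expansion writes `det A = ±1` as an integer combination of the `det E_r`, so these
coefficients have no common factor. Homogeneity can be read off the expansion.
-/

open MvPolynomial Finset

namespace Finsupp

variable {α β M : Type*} [AddCommMonoid M] {s : Finset α} {e : α → M}
  {r r' : α → β}

theorem sum_single_apply_of_injOn (hr : Set.InjOn r s) {a : α} (ha : a ∈ s) :
    (∑ x ∈ s, single (r x) (e x)) (r a) = e a := by
  rw [finsetSum_apply, sum_eq_single_of_mem a ha fun x hx hxa =>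
    single_eq_of_ne fun h => hxa (hr hx ha h.symm), single_eq_same]

theorem eqOn_of_sum_single_eq (he : Set.InjOn e s) (he0 : ∀ a ∈ s, e a ≠ 0)
    (hr : Set.InjOn r s) (hr' : Set.InjOn r' s)
    (h : ∑ x ∈ s, single (r x) (e x) = ∑ x ∈ s, single (r' x) (e x)) : Set.EqOn r r' s := by
  intro a ha
  have hra : (∑ x ∈ s, single (r' x) (e x)) (r a) ≠ 0 := by
    rw [← h, sum_single_apply_of_injOn hr ha]
    exact he0 a ha
  rw [finsetSum_apply] at hra
  obtain ⟨b, hb, hba⟩ := exists_ne_zero_of_sum_ne_zero hra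
  have hrb : r' b = r a := by_contra fun hne => hba (single_eq_of_ne (Ne.symm hne))
  have heb : e b = e a := by
    rw [← sum_single_apply_of_injOn (e := e) hr' hb, ← h, hrb, sum_single_apply_of_injOn hr ha]
  rw [← hrb, he hb ha heb]

end Finsupp

namespace Matrix

variable {ι R : Type*} [DecidableEq ι] [CommRing R]

def replaceRowsWithSingle (N : Matrix ι ι R) (p : ι → Prop) [DecidablePred p] (r : ι → ι) :
    Matrix ι ι R :=
  of fun a => if p a then N a else Pi.single (r a) 1

variable (p : ι → Prop) [DecidablePred p]

@[simp]
theorem replaceRowsWithSingle_row (N : Matrix ι ι R) (r : ι → ι) (a : ι) :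
    N.replaceRowsWithSingle p r a = if p a then N a else Pi.single (r a) 1 :=
  rfl

variable [Fintype ι]

theorem det_eq_sum_prod_mul_det_replaceRowsWithSingle (N : Matrix ι ι R) :
    N.det = ∑ r ∈ Fintype.piFinset (fun a => if p a then {a} else univ),
      (∏ a with ¬ p a, N a (r a)) * (N.replaceRowsWithSingle p r).det := by
  let g : ι → ι → ι → R := fun a b => if p a then N a else Pi.single b (N a b)
  have hrows : N = fun a => ∑ b ∈ if p a then {a} else univ, g a b := by
    ext a : 1
    by_cases ha : p a <;> simp [g, ha]
  have hterm : ∀ r : ι → ι, (fun a => g a (r a)) =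
      fun a => (if ¬ p a then N a (r a) else 1) • N.replaceRowsWithSingle p r a := by
    intro r
    ext a : 1
    by_cases ha : p a <;> simp [g, ha, ← Pi.single_smul]
  conv_lhs => rw [hrows]
  refine (detRowAlternating.toMultilinearMap.map_sum_finset g _).trans
    (sum_congr rfl fun r _ => ?_)
  rw [hterm, prod_filter]
  exact detRowAlternating.toMultilinearMap.map_smul_univ _ _

theorem det_replaceRowsWithSingle_eq_zero {N : Matrix ι ι R} {r : ι → ι}
    (hr : ¬ Set.InjOn r {a | ¬ p a}) : (N.replaceRowsWithSingle p r).det = 0 := by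
  simp only [Set.InjOn, not_forall] at hr
  obtain ⟨a, ha, b, hb, hab, hne⟩ := hr
  refine det_zero_of_row_eq hne ?_
  simp_all

variable {p} {M : Matrix ι ι (MvPolynomial ι R)} {N : Matrix ι ι R} {e : ι → ℕ}

theorem det_eq_sum_monomial_of_apply_eq_ite
    (hM : ∀ a b, M a b = if p a then C (N a b) else X b ^ e a) :
    M.det = ∑ r ∈ Fintype.piFinset (fun a => if p a then {a} else univ),
      monomial (∑ a with ¬ p a, Finsupp.single (r a) (e a))
        (N.replaceRowsWithSingle p r).det := by
  rw [det_eq_sum_prod_mul_det_replaceRowsWithSingle p M]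
  refine sum_congr rfl fun r _ => ?_
  have hrep : M.replaceRowsWithSingle p r = (C : R →+* MvPolynomial ι R).mapMatrix
      (N.replaceRowsWithSingle p r) := by
    ext a b
    by_cases ha : p a <;> simp [ha, hM, Pi.single_apply, apply_ite C]
  have hprod : ∏ a with ¬ p a, M a (r a) =
      ∏ a with ¬ p a, monomial (Finsupp.single (r a) (e a)) 1 :=
    prod_congr rfl fun a ha => by rw [hM, if_neg (mem_filter.1 ha).2, X_pow_eq_monomial]
  rw [hrep, ← RingHom.map_det, hprod, ← monomial_sum_one, mul_comm, C_mul_monomial, mul_one]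

theorem coeff_det_of_apply_eq_ite
    (hM : ∀ a b, M a b = if p a then C (N a b) else X b ^ e a)
    (he : Set.InjOn e {a | ¬ p a}) (he0 : ∀ a, ¬ p a → e a ≠ 0) {r : ι → ι}
    (hr : r ∈ Fintype.piFinset (fun a => if p a then {a} else univ))
    (hinj : Set.InjOn r {a | ¬ p a}) :
    coeff (∑ a with ¬ p a, Finsupp.single (r a) (e a)) M.det =
      (N.replaceRowsWithSingle p r).det := by
  have htop : ∀ r ∈ Fintype.piFinset (fun a => if p a then {a} else univ),
      ∀ a, p a → r a = a :=
    fun r hr a ha => by simpa [ha] using Fintype.mem_piFinset.1 hr a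
  rw [← coe_filter_univ] at he hinj
  rw [det_eq_sum_monomial_of_apply_eq_ite hM, coeff_sum, sum_eq_single_of_mem r hr,
    coeff_monomial, if_pos rfl]
  intro r' hr' hne
  rw [coeff_monomial, ite_eq_right_iff]
  intro hexp
  by_cases hinj' : Set.InjOn r' {a | ¬ p a}
  · rw [← coe_filter_univ] at hinj'
    refine absurd (funext fun a => ?_) hne
    by_cases ha : p a
    · rw [htop r' hr' a ha, htop r hr a ha]
    · exact Finsupp.eqOn_of_sum_single_eq he (by simpa using he0) hinj' hinj hexp
        (by simpa using ha)
  · exact det_replaceRowsWithSingle_eq_zero p hinj'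

theorem dvd_det_of_dvd_coeff_det
    (hM : ∀ a b, M a b = if p a then C (N a b) else X b ^ e a)
    (he : Set.InjOn e {a | ¬ p a}) (he0 : ∀ a, ¬ p a → e a ≠ 0) {m : R}
    (hm : ∀ d, m ∣ coeff d M.det) : m ∣ N.det := by
  rw [det_eq_sum_prod_mul_det_replaceRowsWithSingle p N]
  refine dvd_sum fun r hr => Dvd.dvd.mul_left ?_ _
  by_cases hinj : Set.InjOn r {a | ¬ p a}
  · exact coeff_det_of_apply_eq_ite hM he he0 hr hinj ▸ hm _
  · rw [det_replaceRowsWithSingle_eq_zero p hinj]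
    exact dvd_zero m

theorem isHomogeneous_det_of_apply_eq_ite
    (hM : ∀ a b, M a b = if p a then C (N a b) else X b ^ e a) :
    M.det.IsHomogeneous (∑ a with ¬ p a, e a) := by
  rw [det_eq_sum_monomial_of_apply_eq_ite hM]
  refine IsHomogeneous.sum _ _ _ fun r _ => isHomogeneous_monomial _ ?_
  simp only [map_sum, Finsupp.degree_single]

end Matrix

theorem exists_isUnit_det_extend_of_isCompl {R : Type*} [CommRing R] [IsDomain R]
    [IsPrincipalIdealRing R] {n i : ℕ} (U : Matrix (Fin i) (Fin n) R)
    (hli : LinearIndependent R (fun a : Fin i => U a)) {C : Submodule R (Fin n → R)}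
    (hC : IsCompl (Submodule.span R (Set.range fun a : Fin i => U a)) C) :
    ∃ A : Matrix (Fin n) (Fin n) R, IsUnit A.det ∧
      ∀ (a : Fin n) (h : (a : ℕ) < i), A a = U ⟨a, h⟩ := by
  obtain ⟨k, bC⟩ := Submodule.basisOfPid (Pi.basisFun R (Fin n)) C
  let b₀ := ((Module.Basis.span hli).prod bC).map (Submodule.prodEquivOfIsCompl _ _ hC)
  have hcard : i + k = n := by
    simpa using (Module.finrank_eq_card_basis b₀).symm
  let b := b₀.reindex (finSumFinEquiv.trans (finCongr hcard))
  refine ⟨Matrix.of fun a => b a, ?_, fun a h => ?_⟩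
  · have hA : Matrix.of (fun a => b a) = ((Pi.basisFun R (Fin n)).toMatrix b).transpose := by
      ext a c
      simp [Module.Basis.toMatrix_apply]
    rw [hA, Matrix.det_transpose, ← Module.Basis.det_apply]
    exact Module.Basis.isUnit_det _ _
  · have ha : (finSumFinEquiv.trans (finCongr hcard)).symm a = Sum.inl ⟨a, h⟩ := by
      rw [Equiv.symm_apply_eq]
      ext
      simp
    show b a = U ⟨a, h⟩
    rw [Module.Basis.reindex_apply, ha]
    simp [b₀, Module.Basis.span_apply]

theorem Fin.sum_filter_not_lt_sub_add_one {n i : ℕ} (hi : i ≤ n) :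
    ∑ a ∈ univ.filter (fun a : Fin n => ¬ (a : ℕ) < i), ((a : ℕ) - i + 1) =
      ∑ j ∈ Icc 1 (n - i), j := by
  refine sum_bij' (fun a _ => (a : ℕ) - i + 1) (fun j hj => ⟨i + j - 1, ?_⟩) ?_ ?_ ?_ ?_ ?_
  · simp only [mem_Icc] at hj; omega
  all_goals intro a ha; simp only [mem_filter, mem_univ, true_and, mem_Icc] at ha ⊢
  all_goals first | omega | (ext; simp only; omega)

/-- Let `U` be an `i × n` integer matrix whose rows form a ℤ-basis of a
direct summand of `ℤ^n` of rank `i`, and let `U'` be the `n × n` matrix over `ℤ[s₁,…,s_n]`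
obtained by appending to `U` the rows `(s₁^j,…,s_n^j)` for `j = 1,…,n-i`.  Then `det U'`
is homogeneous of degree `1 + 2 + ⋯ + (n-i)` and is not divisible by any integer greater
than `1`; in particular `det U' ≠ 0`. -/
theorem stmt14 (n i : ℕ) (hi : i ≤ n)
    (U : Matrix (Fin i) (Fin n) ℤ)
    -- the rows of `U` are a ℤ-basis of the submodule they span:
    (hli : LinearIndependent ℤ (fun a : Fin i => U a))
    -- the span of the rows of `U` is a direct summand of `ℤ^n`:
    (hsummand : ∃ C : Submodule ℤ (Fin n → ℤ),
      IsCompl (Submodule.span ℤ (Set.range fun a : Fin i => U a)) C)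
    -- `U'` is obtained from `U` by appending the rows `(s₁^j,…,s_n^j)`, `j = 1,…,n-i`:
    (U' : Matrix (Fin n) (Fin n) (MvPolynomial (Fin n) ℤ))
    (hU' : ∀ (a : Fin n) (b : Fin n),
      U' a b = if h : (a : ℕ) < i then MvPolynomial.C (U ⟨(a : ℕ), h⟩ b)
        else MvPolynomial.X b ^ ((a : ℕ) - i + 1)) :
    (U'.det).IsHomogeneous (∑ j ∈ Finset.Icc 1 (n - i), j) ∧
    (∀ m : ℤ, 1 < m → ¬ ∀ d, m ∣ (U'.det).coeff d) ∧
    U'.det ≠ 0 := by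
  obtain ⟨W, hW⟩ := hsummand
  obtain ⟨A, hAdet, hA⟩ := exists_isUnit_det_extend_of_isCompl U hli hW
  have hM : ∀ a b, U' a b = if (a : ℕ) < i then MvPolynomial.C (A a b)
      else MvPolynomial.X b ^ ((a : ℕ) - i + 1) := by
    intro a b
    rw [hU']
    split_ifs with h
    · rw [hA a h]
    · rfl
  have he : Set.InjOn (fun a : Fin n => (a : ℕ) - i + 1) {a | ¬ (a : ℕ) < i} :=
    fun a ha b hb hab => Fin.ext (by simp_all; omega)
  have hcontent : ∀ m : ℤ, 1 < m → ¬ ∀ d, m ∣ (U'.det).coeff d := fun m hm hdvd => by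
    have hunit : IsUnit m := isUnit_of_dvd_unit
      (Matrix.dvd_det_of_dvd_coeff_det hM he (fun _ _ => Nat.succ_ne_zero _) hdvd) hAdet
    rcases Int.isUnit_iff.1 hunit with rfl | rfl <;> omega
  refine ⟨?_, hcontent, fun h0 => hcontent 2 one_lt_two fun d => by simp [h0]⟩
  rw [← Fin.sum_filter_not_lt_sub_add_one hi]
  exact Matrix.isHomogeneous_det_of_apply_eq_ite hM
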